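/- Let κ ≥ 1 and let A₁, …, A_κ ∈ Mat₂(ℝ) with det A_j = 1 and A_j ≠ I, A_j ≠ −I for each j. Let N₊ := { E ∈ Mat₂(ℝ) : E ≠ 0, E² = 0, e₁₂ ≤ 0 ≤ e₂₁ }, equipped with the subspace topology from Mat₂(ℝ). Then the set N₊(A) := { (E₁, …, E_κ) ∈ N₊^κ : E_i · A_j · E_j ≠ 0 for all i, j ∈ {1, …, κ} } is open and dense in N₊^κ. -/

import Mathlib

/-!
Every `E ∈ N₊` factors as `E = v ⊗ v^⊥` with `v ∈ ℝ² \ {0}` and `v^⊥ = (v₁, -v₀)`, so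
`(ℝ² \ {0})^κ → N₊^κ` is a continuous surjection, and
`(v_i ⊗ v_i^⊥) A_j (v_j ⊗ v_j^⊥) = ⟨v_i^⊥, A_j v_j⟩ · v_i ⊗ v_j^⊥`.
Each `w ↦ ⟨w_i^⊥, A_j w_j⟩` is a quadratic polynomial on `(ℝ²)^κ` which is not identically
zero (for `i ≠ j` because `A_j ≠ 0`, for `i = j` because `A_j ∈ SL₂(ℝ) \ {±1}` is not
scalar), so by the identity principle its nonvanishing locus is open and dense. By Baire, so is
the intersection over `i, j`, and the continuous surjection carries this dense set onto a dense
subset of `N₊(A)`.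
-/

open Matrix

noncomputable section

/-- The set `N₊` of nonzero nilpotent `2 × 2` real matrices with `e₁₂ ≤ 0 ≤ e₂₁`. -/
def Nplus : Set (Matrix (Fin 2) (Fin 2) ℝ) :=
  {E | E ≠ 0 ∧ E * E = 0 ∧ E 0 1 ≤ 0 ∧ 0 ≤ E 1 0}

@[fun_prop]
theorem analyticAt_apply {𝕜 ι : Type*} [NontriviallyNormedField 𝕜] [Fintype ι]
    {F : ι → Type*} [∀ i, NormedAddCommGroup (F i)] [∀ i, NormedSpace 𝕜 (F i)]
    (i : ι) (x : ∀ i, F i) : AnalyticAt 𝕜 (fun f : ∀ i, F i => f i) x :=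
  (ContinuousLinearMap.proj (R := 𝕜) (φ := F) i).analyticAt x

theorem AnalyticOnNhd.dense_setOf_ne_zero {𝕜 E F : Type*} [NontriviallyNormedField 𝕜]
    [NormedAddCommGroup E] [NormedSpace 𝕜 E] [PreconnectedSpace E]
    [NormedAddCommGroup F] [NormedSpace 𝕜 F] {f : E → F} (hf : AnalyticOnNhd 𝕜 f Set.univ)
    {x₀ : E} (hx₀ : f x₀ ≠ 0) : Dense {x | f x ≠ 0} := by
  intro x
  by_contra hx
  rw [mem_closure_iff_frequently, Filter.not_frequently] at hx
  refine hx₀ (hf.eqOn_zero_of_preconnected_of_eventuallyEq_zero isPreconnected_univ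
    (Set.mem_univ x) ?_ (Set.mem_univ x₀))
  filter_upwards [hx] with y hy
  simpa using hy

namespace Nplus

variable {R : Type*} [CommRing R]

def perp (v : Fin 2 → R) : Fin 2 → R := ![v 1, -v 0]

def ofVec (v : Fin 2 → R) : Matrix (Fin 2) (Fin 2) R := vecMulVec v (perp v)

@[simp]
theorem perp_eq_zero {v : Fin 2 → R} : perp v = 0 ↔ v = 0 := by
  simp [perp, funext_iff, Fin.forall_fin_two, and_comm]

theorem perp_dotProduct_self (v : Fin 2 → R) : perp v ⬝ᵥ v = 0 := by
  simp [perp, dotProduct, Fin.sum_univ_two, mul_comm]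

theorem ofVec_mul_mul_ofVec (v w : Fin 2 → R) (A : Matrix (Fin 2) (Fin 2) R) :
    ofVec v * A * ofVec w = (perp v ⬝ᵥ A *ᵥ w) • vecMulVec v (perp w) := by
  rw [ofVec, ofVec, vecMulVec_mul, vecMulVec_mul_vecMulVec, vecMulVec_smul, dotProduct_mulVec]

theorem ofVec_mul_mul_ofVec_ne_zero [IsDomain R] {v w : Fin 2 → R}
    {A : Matrix (Fin 2) (Fin 2) R} (h : perp v ⬝ᵥ A *ᵥ w ≠ 0) : ofVec v * A * ofVec w ≠ 0 := by
  have hv : v ≠ 0 := by rintro rfl; simp [perp] at h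
  have hw : w ≠ 0 := by rintro rfl; simp at h
  rw [ofVec_mul_mul_ofVec]
  exact smul_ne_zero h (by simp [hv, hw])

theorem ofVec_mem {v : Fin 2 → ℝ} (hv : v ≠ 0) : ofVec v ∈ Nplus := by
  refine ⟨by simp [ofVec, hv], ?_, ?_, ?_⟩
  · have h := ofVec_mul_mul_ofVec v v 1
    rwa [mul_one, one_mulVec, perp_dotProduct_self, zero_smul] at h
  · simpa [ofVec, perp] using mul_self_nonneg (v 0)
  · simpa [ofVec, perp] using mul_self_nonneg (v 1)

theorem exists_eq_ofVec {E : Matrix (Fin 2) (Fin 2) ℝ} (hE : E ∈ Nplus) : ∃ v, E = ofVec v := by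
  obtain ⟨-, hsq, hb, hc⟩ := hE
  have htr : E 0 0 + E 1 1 = 0 := by
    simpa [trace_fin_two] using
      (isNilpotent_trace_of_isNilpotent (M := E) ⟨2, by rw [sq, hsq]⟩).eq_zero
  have hdet : E 0 0 * E 1 1 - E 0 1 * E 1 0 = 0 := by
    have h : E.det * E.det = 0 := by rw [← det_mul, hsq, det_zero]
    simpa [det_fin_two] using mul_self_eq_zero.1 h
  -- `E 0 0 ^ 2 = -E 0 1 * E 1 0`, so `v = (√(-E 0 1), ±√(E 1 0))` with the sign `s` of `E 0 0`.
  obtain ⟨s, hs, hsa⟩ : ∃ s : ℝ, s ^ 2 = 1 ∧ s * |E 0 0| = E 0 0 := by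
    rcases le_total 0 (E 0 0) with h | h
    · exact ⟨1, by norm_num, by rw [one_mul, abs_of_nonneg h]⟩
    · exact ⟨-1, by norm_num, by rw [abs_of_nonpos h, neg_one_mul, neg_neg]⟩
  have hbc : √(-E 0 1) * √(E 1 0) = |E 0 0| := by
    rw [← Real.sqrt_mul (neg_nonneg.2 hb), ← Real.sqrt_sq_eq_abs]
    congr 1
    linear_combination hdet - E 0 0 * htr
  refine ⟨![√(-E 0 1), s * √(E 1 0)], ?_⟩
  ext i j
  fin_cases i <;> fin_cases j <;> simp [ofVec, perp]
  · linear_combination -hsa - s * hbc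
  · linear_combination Real.mul_self_sqrt (neg_nonneg.2 hb)
  · linear_combination -s ^ 2 * Real.mul_self_sqrt hc - E 1 0 * hs
  · linear_combination htr + hsa + s * hbc

theorem continuous_ofVec : Continuous (ofVec : (Fin 2 → ℝ) → Matrix (Fin 2) (Fin 2) ℝ) := by
  refine continuous_matrix fun i j => ?_
  fin_cases j <;> simp only [ofVec, perp, vecMulVec_apply] <;> fun_prop

theorem exists_perp_dotProduct_mulVec_self_ne_zero [IsDomain R] {A : Matrix (Fin 2) (Fin 2) R}
    (hdet : A.det = 1) (h₁ : A ≠ 1) (h₂ : A ≠ -1) : ∃ v, perp v ⬝ᵥ A *ᵥ v ≠ 0 := by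
  by_contra! h
  have h10 : A 1 0 = 0 := by simpa [perp, mulVec, dotProduct] using h ![1, 0]
  have h01 : A 0 1 = 0 := by simpa [perp, mulVec, dotProduct] using h ![0, 1]
  have h11 : A 1 1 = A 0 0 := by
    have h_one_one := h ![1, 1]
    simp [perp, mulVec, dotProduct, h10, h01] at h_one_one
    linear_combination -h_one_one
  have hsq : (A 0 0 - 1) * (A 0 0 + 1) = 0 := by
    rw [det_fin_two, h10, h01, h11] at hdet
    linear_combination hdet
  rcases mul_eq_zero.1 hsq with h | h
  · have ha : A 0 0 = 1 := sub_eq_zero.1 h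
    exact h₁ (by ext i j; fin_cases i <;> fin_cases j <;> simp [h10, h01, h11, ha])
  · have ha : A 0 0 = -1 := eq_neg_of_add_eq_zero_left h
    exact h₂ (by ext i j; fin_cases i <;> fin_cases j <;> simp [h10, h01, h11, ha])

theorem exists_perp_dotProduct_mulVec_ne_zero {A : Matrix (Fin 2) (Fin 2) ℝ} (hA : A ≠ 0) :
    ∃ v w, perp v ⬝ᵥ A *ᵥ w ≠ 0 := by
  obtain ⟨w, hw⟩ : ∃ w, A *ᵥ w ≠ 0 := by
    by_contra! h
    exact hA (ext_iff_mulVec.2 fun w => by rw [h w, zero_mulVec])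
  have hperp : perp ![-(A *ᵥ w) 1, (A *ᵥ w) 0] = A *ᵥ w := by
    ext i; fin_cases i <;> simp [perp]
  exact ⟨_, w, by rwa [hperp, Ne, dotProduct_self_eq_zero]⟩

theorem exists_perp_apply_dotProduct_mulVec_apply_ne_zero {ι : Type*} [DecidableEq ι]
    {A : Matrix (Fin 2) (Fin 2) ℝ} (hdet : A.det = 1) (h₁ : A ≠ 1) (h₂ : A ≠ -1) (i j : ι) :
    ∃ w : ι → Fin 2 → ℝ, perp (w i) ⬝ᵥ A *ᵥ w j ≠ 0 := by
  rcases eq_or_ne i j with rfl | hij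
  · obtain ⟨v, hv⟩ := exists_perp_dotProduct_mulVec_self_ne_zero hdet h₁ h₂
    exact ⟨fun _ => v, hv⟩
  · obtain ⟨v, w, hvw⟩ := exists_perp_dotProduct_mulVec_ne_zero (A := A) (by
      rintro rfl; simp at hdet)
    exact ⟨Function.update (fun _ => w) i v, by simpa [hij.symm] using hvw⟩

theorem dense_setOf_perp_dotProduct_mulVec_ne_zero {ι : Type*} [Fintype ι] [DecidableEq ι]
    {A : ι → Matrix (Fin 2) (Fin 2) ℝ} (hdet : ∀ j, (A j).det = 1)
    (hA : ∀ j, A j ≠ 1 ∧ A j ≠ -1) :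
    Dense {w : ι → Fin 2 → ℝ | ∀ i j, perp (w i) ⬝ᵥ A j *ᵥ w j ≠ 0} := by
  have hanalytic (i j : ι) :
      AnalyticOnNhd ℝ (fun w : ι → Fin 2 → ℝ => perp (w i) ⬝ᵥ A j *ᵥ w j) Set.univ := by
    intro w _
    simp only [perp, dotProduct, mulVec, Fin.sum_univ_two, cons_val_zero, cons_val_one]
    fun_prop
  have hopen (i j : ι) : IsOpen {w : ι → Fin 2 → ℝ | perp (w i) ⬝ᵥ A j *ᵥ w j ≠ 0} :=
    isOpen_ne_fun (hanalytic i j).continuous continuous_const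
  have hdense (i j : ι) : Dense {w : ι → Fin 2 → ℝ | perp (w i) ⬝ᵥ A j *ᵥ w j ≠ 0} := by
    obtain ⟨w₀, hw₀⟩ :=
      exists_perp_apply_dotProduct_mulVec_apply_ne_zero (hdet j) (hA j).1 (hA j).2 i j
    exact (hanalytic i j).dense_setOf_ne_zero hw₀
  simp only [Set.ofPred_forall]
  exact dense_iInter_of_isOpen (fun i => isOpen_iInter_of_finite (hopen i))
    fun i => dense_iInter_of_isOpen (hopen i) (hdense i)

end Nplus

open Nplus

theorem stmt_16_general (κ : ℕ) (A : Fin κ → Matrix (Fin 2) (Fin 2) ℝ)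
    (hdet : ∀ j, (A j).det = 1) (hA : ∀ j, A j ≠ 1 ∧ A j ≠ -1) :
    IsOpen {E : {E : Fin κ → Matrix (Fin 2) (Fin 2) ℝ // ∀ i, E i ∈ Nplus} |
        ∀ i j, E.1 i * A j * E.1 j ≠ 0} ∧
    Dense {E : {E : Fin κ → Matrix (Fin 2) (Fin 2) ℝ // ∀ i, E i ∈ Nplus} |
        ∀ i j, E.1 i * A j * E.1 j ≠ 0} := by
  constructor
  · have hcont (i : Fin κ) :
        Continuous fun E : {E : Fin κ → Matrix (Fin 2) (Fin 2) ℝ // ∀ i, E i ∈ Nplus} => E.1 i :=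
      (continuous_apply i).comp continuous_subtype_val
    simp only [Set.ofPred_forall]
    exact isOpen_iInter_of_finite fun i => isOpen_iInter_of_finite fun j =>
      isOpen_ne_fun (((hcont i).matrix_mul continuous_const).matrix_mul (hcont j)) continuous_const
  · refine (Subtype.dense_iff (s := {E : Fin κ → Matrix (Fin 2) (Fin 2) ℝ | ∀ i, E i ∈ Nplus})).2
      fun E hE => ?_
    choose v hv using fun i => exists_eq_ofVec (hE i)
    have hcont : Continuous fun (w : Fin κ → Fin 2 → ℝ) i => ofVec (w i) :=
      continuous_pi fun i => continuous_ofVec.comp (continuous_apply i)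
    refine closure_mono ?_ (funext hv ▸ mem_closure_image hcont.continuousAt
      (dense_setOf_perp_dotProduct_mulVec_ne_zero hdet hA v))
    rintro _ ⟨w, hw, rfl⟩
    exact ⟨⟨_, fun i => ofVec_mem fun h => hw i i (by simp [h, perp])⟩,
      fun i j => ofVec_mul_mul_ofVec_ne_zero (hw i j), rfl⟩

/-- Given `A₁, …, A_κ ∈ SL₂(ℝ) \ {±I}`, the set
`N₊(A) = {(E₁, …, E_κ) ∈ N₊^κ : Eᵢ Aⱼ Eⱼ ≠ 0 ∀ i, j}` is open and dense in `N₊^κ`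
(with the subspace topology). -/
theorem stmt_16 (κ : ℕ) (hκ : 1 ≤ κ) (A : Fin κ → Matrix (Fin 2) (Fin 2) ℝ)
    (hdet : ∀ j, (A j).det = 1) (hA : ∀ j, A j ≠ 1 ∧ A j ≠ -1) :
    IsOpen {E : {E : Fin κ → Matrix (Fin 2) (Fin 2) ℝ // ∀ i, E i ∈ Nplus} |
        ∀ i j, E.1 i * A j * E.1 j ≠ 0} ∧
    Dense {E : {E : Fin κ → Matrix (Fin 2) (Fin 2) ℝ // ∀ i, E i ∈ Nplus} |
        ∀ i j, E.1 i * A j * E.1 j ≠ 0} :=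
  stmt_16_general κ A hdet hA
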